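/- Assume only the block Arnoldi relation A W_j = W_{j+1} H̄_j, where W_{j+1} = [V₁ … V_{j+1}] ∈ ℂ^{n×(j+1)L} has orthonormal columns and F₀ = V₁ S₀ with S₀ upper triangular and invertible (the columns of W_{j+1} need not span block Krylov subspaces, since dependent Arnoldi vectors produced by an earlier breakdown may have been replaced by random orthonormalized vectors), together with the QR setup and CS setup. Suppose H_j is invertible, Ĥ_{jj} = M̂_j Ŷ₂ with M̂_j ∈ ℂ^{L×L} unitary and Ŷ₂ ∈ ℂ^{L×L} upper triangular and invertible, and Q̂_j^{(b)} = M̂_jᴴ; set 𝒬 := M̂_jᴴ 𝒱₁. Then X_j^{(F)} − X_j^{(G)} = W_j·[−R_{j−1}^{−1} Z_j; I_L]·Ŷ₂^{−1} 𝒬 𝒮² 𝒬ᴴ Ĉ_j, where X_j^{(F)} = X₀ + W_j H_j^{−1} E_L^{[jL]} S₀ is the j-th block FOM iterate and X_j^{(G)} = X₀ + W_j Y_j^{(G)} is the j-th block GMRES iterate. -/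

import Mathlib

open Matrix

noncomputable section

set_option maxHeartbeats 1000000

/-- Squared Frobenius norm of a complex matrix. -/
def frobSq {a b : Type*} [Fintype a] [Fintype b] (M : Matrix a b ℂ) : ℝ :=
  ∑ r, ∑ c, Complex.normSq (M r c)

/-- The four Moore–Penrose conditions. -/
def IsMoorePenrose {a b : Type*} [Fintype a] [Fintype b]
    (M : Matrix a b ℂ) (P : Matrix b a ℂ) : Prop :=
  M * P * M = M ∧ P * M * P = P ∧ (M * P)ᴴ = M * P ∧ (P * M)ᴴ = P * M

/-- The block Krylov subspace `𝕂_i(A, F)`: the span of all columns of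
`F, A F, …, A^(i-1) F`. -/
def blockKrylov {n L : ℕ} (A : Matrix (Fin n) (Fin n) ℂ)
    (F : Matrix (Fin n) (Fin L) ℂ) (i : ℕ) : Submodule ℂ (Fin n → ℂ) :=
  Submodule.span ℂ { v | ∃ k < i, ∃ c : Fin L, v = fun r => (A ^ k * F) r c }

/-- `E_L^{[mL]}` : the first `L` columns of the `mL × mL` identity matrix
(block row indexing). -/
def EL (m L : ℕ) : Matrix (Fin m × Fin L) (Fin L) ℂ :=
  Matrix.of fun r c => if (r.1 : ℕ) = 0 ∧ r.2 = c then 1 else 0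

/-- An `L × L` matrix is upper triangular. -/
def utL {L : ℕ} (M : Matrix (Fin L) (Fin L) ℂ) : Prop :=
  ∀ a b : Fin L, (b : ℕ) < (a : ℕ) → M a b = 0

/-- A block-indexed `mL × mL` matrix is upper triangular. -/
def utBig {m L : ℕ} (M : Matrix (Fin m × Fin L) (Fin m × Fin L) ℂ) : Prop :=
  ∀ r c : Fin m × Fin L, (c.1 : ℕ) * L + (c.2 : ℕ) < (r.1 : ℕ) * L + (r.2 : ℕ) → M r c = 0

/-- Stack a block-tall matrix on top of an extra block row. -/
def vcat {m L : ℕ} {col : Type*} (T : Matrix (Fin m × Fin L) col ℂ)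
    (Bo : Matrix (Fin L) col ℂ) : Matrix (Fin (m+1) × Fin L) col ℂ :=
  Matrix.of fun r cc => if h : (r.1 : ℕ) < m then T (⟨r.1, h⟩, r.2) cc else Bo r.2 cc

/-- The block matrix `[[R, Z], [0, N]]`. -/
def twoBlock {m L : ℕ} (R : Matrix (Fin m × Fin L) (Fin m × Fin L) ℂ)
    (Z : Matrix (Fin m × Fin L) (Fin L) ℂ) (N : Matrix (Fin L) (Fin L) ℂ) :
    Matrix (Fin (m+1) × Fin L) (Fin (m+1) × Fin L) ℂ :=
  Matrix.of fun r c =>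
    if hr : (r.1 : ℕ) < m then
      if hc : (c.1 : ℕ) < m then R (⟨r.1, hr⟩, r.2) (⟨c.1, hc⟩, c.2)
      else Z (⟨r.1, hr⟩, r.2) c.2
    else
      if (c.1 : ℕ) < m then 0 else N r.2 c.2

/-- The block matrix `[[R, Z], [0, Hmid], [0, Hbot]]`. -/
def threeBlock {m L : ℕ} (R : Matrix (Fin m × Fin L) (Fin m × Fin L) ℂ)
    (Z : Matrix (Fin m × Fin L) (Fin L) ℂ) (Hmid Hbot : Matrix (Fin L) (Fin L) ℂ) :
    Matrix (Fin (m+2) × Fin L) (Fin (m+1) × Fin L) ℂ :=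
  Matrix.of fun r c =>
    if hr : (r.1 : ℕ) < m then
      if hc : (c.1 : ℕ) < m then R (⟨r.1, hr⟩, r.2) (⟨c.1, hc⟩, c.2)
      else Z (⟨r.1, hr⟩, r.2) c.2
    else
      if (c.1 : ℕ) < m then 0
      else if (r.1 : ℕ) = m then Hmid r.2 c.2 else Hbot r.2 c.2

/-- `diag(Q, I_L)` : extend a block-indexed square matrix by an identity block. -/
def extendOne {m L : ℕ} (Q : Matrix (Fin m × Fin L) (Fin m × Fin L) ℂ) :
    Matrix (Fin (m+1) × Fin L) (Fin (m+1) × Fin L) ℂ :=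
  Matrix.of fun r c =>
    if hr : (r.1 : ℕ) < m then
      if hc : (c.1 : ℕ) < m then Q (⟨r.1, hr⟩, r.2) (⟨c.1, hc⟩, c.2) else 0
    else
      if (c.1 : ℕ) < m then 0 else if r.2 = c.2 then 1 else 0

/-- `diag(I_{mL}, Q)` : an identity block, then `Q` in the bottom right corner. -/
def extendBot {m L : ℕ} (Q : Matrix (Fin L) (Fin L) ℂ) :
    Matrix (Fin (m+1) × Fin L) (Fin (m+1) × Fin L) ℂ :=
  Matrix.of fun r c =>
    if (r.1 : ℕ) < m ∨ (c.1 : ℕ) < m then (if r = c then 1 else 0)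
    else Q r.2 c.2

/-- The `(m+2)L × (m+2)L` matrix which is the identity outside of its trailing
principal `2L × 2L` block, which is `[[Q11, Q12], [Q21, Q22]]`. -/
def trailingTwo {m L : ℕ} (Q11 Q12 Q21 Q22 : Matrix (Fin L) (Fin L) ℂ) :
    Matrix (Fin (m+2) × Fin L) (Fin (m+2) × Fin L) ℂ :=
  Matrix.of fun r c =>
    if (r.1 : ℕ) < m ∨ (c.1 : ℕ) < m then (if r = c then 1 else 0)
    else if (r.1 : ℕ) = m then
      (if (c.1 : ℕ) = m then Q11 r.2 c.2 else Q12 r.2 c.2)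
    else
      (if (c.1 : ℕ) = m then Q21 r.2 c.2 else Q22 r.2 c.2)

/-- The block matrix `[R ; 0]` (one extra zero block row below `R`). -/
def stackZero {m L : ℕ} (R : Matrix (Fin m × Fin L) (Fin m × Fin L) ℂ) :
    Matrix (Fin (m+1) × Fin L) (Fin m × Fin L) ℂ :=
  Matrix.of fun r c => if h : (r.1 : ℕ) < m then R (⟨r.1, h⟩, r.2) c else 0

/-- A breakdown-free block Arnoldi decomposition of length `j = p + 1` for the block
linear system `A X = B` with initial guess `X₀` (block size `L`). -/
structure BlockArnoldi (n L p : ℕ) : Type where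
  A : Matrix (Fin n) (Fin n) ℂ
  B : Matrix (Fin n) (Fin L) ℂ
  X0 : Matrix (Fin n) (Fin L) ℂ
  W : Matrix (Fin n) (Fin (p+2) × Fin L) ℂ
  S0 : Matrix (Fin L) (Fin L) ℂ
  Hbar : Matrix (Fin (p+2) × Fin L) (Fin (p+1) × Fin L) ℂ
  hL : 1 ≤ L
  hn : (p+2) * L ≤ n
  F0_rank : (B - A * X0).rank = L
  orth : Wᴴ * W = 1
  S0_ut : utL S0
  S0_inv : IsUnit S0
  F0_eq : B - A * X0 = (W.submatrix id fun c : Fin L => ((0 : Fin (p+2)), c)) * S0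
  span : ∀ i : ℕ, i ≤ p + 2 →
    blockKrylov A (B - A * X0) i =
      Submodule.span ℂ { v | ∃ c : Fin (p+2) × Fin L, (c.1 : ℕ) < i ∧ v = fun r => W r c }
  arnoldi : A * W.submatrix id (Prod.map Fin.castSucc id) = W * Hbar
  hess : ∀ r c, (c.1 : ℕ) + 1 < (r.1 : ℕ) → Hbar r c = 0
  sub_ut : ∀ (k : Fin (p+1)) (a b : Fin L), (b : ℕ) < (a : ℕ) → Hbar (k.succ, a) (k, b) = 0
  sub_inv : ∀ k : Fin (p+1), IsUnit (Matrix.of fun a b : Fin L => Hbar (k.succ, a) (k, b))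

namespace BlockArnoldi

variable {n L p : ℕ}

/-- `H̄_{j-1}`, the leading `jL × (j-1)L` submatrix of `H̄_j`. -/
def Hprev (D : BlockArnoldi n L p) : Matrix (Fin (p+1) × Fin L) (Fin p × Fin L) ℂ :=
  D.Hbar.submatrix (Prod.map Fin.castSucc id) (Prod.map Fin.castSucc id)

/-- `H_j`, the leading `jL × jL` submatrix of `H̄_j`. -/
def Hsq (D : BlockArnoldi n L p) : Matrix (Fin (p+1) × Fin L) (Fin (p+1) × Fin L) ℂ :=
  D.Hbar.submatrix (Prod.map Fin.castSucc id) id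

/-- `W_j = [V₁ … V_j]`. -/
def Wfull (D : BlockArnoldi n L p) : Matrix (Fin n) (Fin (p+1) × Fin L) ℂ :=
  D.W.submatrix id (Prod.map Fin.castSucc id)

/-- `W_{j-1} = [V₁ … V_{j-1}]`. -/
def Wprev (D : BlockArnoldi n L p) : Matrix (Fin n) (Fin p × Fin L) ℂ :=
  D.W.submatrix id (Prod.map (fun i : Fin p => (i.castSucc.castSucc : Fin (p+2))) id)

/-- `V_j`, the `j`-th block Arnoldi vector. -/
def Vj (D : BlockArnoldi n L p) : Matrix (Fin n) (Fin L) ℂ :=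
  D.W.submatrix id fun c : Fin L => (((Fin.last p).castSucc : Fin (p+2)), c)

end BlockArnoldi

/-- `Y` is the unique minimizer of `‖Hb • Y' - T‖_F` over all `Y'`. -/
def IsUniqueFrobMin {a b c : Type*} [Fintype a] [Fintype b] [Fintype c]
    (Hb : Matrix a b ℂ) (T : Matrix a c ℂ) (Y : Matrix b c ℂ) : Prop :=
  (∀ Y', frobSq (Hb * Y - T) ≤ frobSq (Hb * Y' - T)) ∧
  ∀ Y', (∀ Y'', frobSq (Hb * Y' - T) ≤ frobSq (Hb * Y'' - T)) → Y' = Y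

/-- `Y_j^{(G)}` is the solution of the `j`-th block GMRES least-squares subproblem. -/
def IsBlockGMRESj {n L p : ℕ} (D : BlockArnoldi n L p)
    (Y : Matrix (Fin (p+1) × Fin L) (Fin L) ℂ) : Prop :=
  IsUniqueFrobMin D.Hbar (EL (p+2) L * D.S0) Y

/-- `Y_{j-1}^{(G)}` is the solution of the `(j-1)`-st block GMRES least-squares
subproblem. -/
def IsBlockGMRESprev {n L p : ℕ} (D : BlockArnoldi n L p)
    (Y : Matrix (Fin p × Fin L) (Fin L) ℂ) : Prop :=
  IsUniqueFrobMin D.Hprev (EL (p+1) L * D.S0) Y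

/-- The QR setup at step `j = p+1` : a QR factorization `Q̄_{j-1} H̄_{j-1} = [R_{j-1}; 0]`
from the previous step, the induced splitting
`diag(Q̄_{j-1}, I_L)·H̄_j = [[R,Z],[0,Ĥ_{jj}],[0,H_{j+1,j}]]`, the unitary `Q_j`
(identity outside its trailing principal `2L×2L` block) completing the
QR factorization of `H̄_j`, and the unitary `Q̂_j^{(b)}` triangularizing `Ĥ_{jj}`. -/
structure QRSetup (L p : ℕ) (Hbar : Matrix (Fin (p+2) × Fin L) (Fin (p+1) × Fin L) ℂ)
    (S0 : Matrix (Fin L) (Fin L) ℂ) : Type where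
  Qbar : Matrix (Fin (p+1) × Fin L) (Fin (p+1) × Fin L) ℂ
  R : Matrix (Fin p × Fin L) (Fin p × Fin L) ℂ
  Z : Matrix (Fin p × Fin L) (Fin L) ℂ
  Hhat : Matrix (Fin L) (Fin L) ℂ
  Hsub : Matrix (Fin L) (Fin L) ℂ
  Q11 : Matrix (Fin L) (Fin L) ℂ
  Q12 : Matrix (Fin L) (Fin L) ℂ
  Q21 : Matrix (Fin L) (Fin L) ℂ
  Q22 : Matrix (Fin L) (Fin L) ℂ
  N : Matrix (Fin L) (Fin L) ℂ
  Qhatb : Matrix (Fin L) (Fin L) ℂ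
  Nhat : Matrix (Fin L) (Fin L) ℂ
  Qbar_unit : Qbarᴴ * Qbar = 1
  Qbar_base : p = 0 → Qbar = 1
  R_ut : utBig R
  R_inv : IsUnit R
  qr_prev : Qbar * Hbar.submatrix (Prod.map Fin.castSucc id) (Prod.map Fin.castSucc id)
      = stackZero R
  qr_split : extendOne Qbar * Hbar = threeBlock R Z Hhat Hsub
  Qj_unit : (trailingTwo (m := p) Q11 Q12 Q21 Q22)ᴴ * trailingTwo (m := p) Q11 Q12 Q21 Q22 = 1
  qr_full : trailingTwo (m := p) Q11 Q12 Q21 Q22 * (extendOne Qbar * Hbar)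
      = threeBlock R Z N 0
  N_ut : utL N
  N_inv : IsUnit N
  Qhatb_unit : Qhatbᴴ * Qhatb = 1
  Nhat_def : Nhat = Qhatb * Hhat
  Nhat_ut : utL Nhat

namespace QRSetup

variable {L p : ℕ} {Hbar : Matrix (Fin (p+2) × Fin L) (Fin (p+1) × Fin L) ℂ}
  {S0 : Matrix (Fin L) (Fin L) ℂ}

/-- `C̃_j` : the last `L` rows of `Q̄_{j-1} E_L^{[jL]} S₀`. -/
def Ct (S : QRSetup L p Hbar S0) : Matrix (Fin L) (Fin L) ℂ :=
  Matrix.of fun a b => (S.Qbar * (EL (p+1) L * S0)) ((Fin.last p), a) b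

/-- `C_j := Q_j^{(11)} C̃_j`. -/
def C (S : QRSetup L p Hbar S0) : Matrix (Fin L) (Fin L) ℂ := S.Q11 * S.Ct

/-- `Ĉ_j := Q̂_j^{(b)} C̃_j`. -/
def Chat (S : QRSetup L p Hbar S0) : Matrix (Fin L) (Fin L) ℂ := S.Qhatb * S.Ct

end QRSetup

/-! Both iterates come out of the same block QR data. Since `Q̄_j = Q_j diag(Q̄_{j-1}, I_L)` is
unitary and reduces `H̄_j` to `[[R, Z], [0, N]; 0]`, the GMRES residual splits off a constant
block and `Y^(G)` is obtained by block back substitution with `[[R, Z], [0, N]]` on the rotated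
right-hand side; `Q̄_{j-1} H_j = [[R, Z], [0, Ĥ]]` gives `Y^(F)` by back substitution with the same
top part. The two solutions therefore differ by `[-R⁻¹ Z; I] (Ĥ⁻¹ C̃ - N⁻¹ C)`. Finally the last
block column of `Q_j diag(Q̄_{j-1}, I_L) H̄_j` together with the CS decomposition of `Q_j` gives
`𝒞 𝒰₁ᴴ N = 𝒱₁ᴴ Ĥ`, hence `N⁻¹ Q_j^(11) = Ĥ⁻¹ 𝒱₁ 𝒞² 𝒱₁ᴴ` and, by `𝒞² + 𝒮² = 1`,
`Ĥ⁻¹ - N⁻¹ Q_j^(11) = Ĥ⁻¹ 𝒱₁ 𝒮² 𝒱₁ᴴ`. -/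

namespace BlockMatrix

variable {m L : ℕ} {col : Type*}

def topBlock (M : Matrix (Fin (m+1) × Fin L) col ℂ) : Matrix (Fin m × Fin L) col ℂ :=
  M.submatrix (Prod.map Fin.castSucc id) id

def lastBlock (M : Matrix (Fin (m+1) × Fin L) col ℂ) : Matrix (Fin L) col ℂ :=
  M.submatrix (fun a => (Fin.last m, a)) id

@[simp] lemma vcat_apply_castSucc (T : Matrix (Fin m × Fin L) col ℂ) (Bo : Matrix (Fin L) col ℂ)
    (i : Fin m) (a : Fin L) (c : col) : vcat T Bo (i.castSucc, a) c = T (i, a) c := by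
  simp [vcat]

@[simp] lemma vcat_apply_last (T : Matrix (Fin m × Fin L) col ℂ) (Bo : Matrix (Fin L) col ℂ)
    (a : Fin L) (c : col) : vcat T Bo (Fin.last m, a) c = Bo a c := by
  simp [vcat]

@[simp] lemma topBlock_vcat (T : Matrix (Fin m × Fin L) col ℂ) (Bo : Matrix (Fin L) col ℂ) :
    topBlock (vcat T Bo) = T := by
  ext ⟨i, a⟩ c
  simp [topBlock]

@[simp] lemma lastBlock_vcat (T : Matrix (Fin m × Fin L) col ℂ) (Bo : Matrix (Fin L) col ℂ) :
    lastBlock (vcat T Bo) = Bo := by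
  ext
  simp [lastBlock]

lemma vcat_topBlock_lastBlock (M : Matrix (Fin (m+1) × Fin L) col ℂ) :
    vcat (topBlock M) (lastBlock M) = M := by
  ext ⟨r, a⟩ c
  induction r using Fin.lastCases <;> simp [topBlock, lastBlock]

lemma vcat_inj {T T' : Matrix (Fin m × Fin L) col ℂ} {Bo Bo' : Matrix (Fin L) col ℂ} :
    vcat T Bo = vcat T' Bo' ↔ T = T' ∧ Bo = Bo' := by
  refine ⟨fun h => ⟨?_, ?_⟩, fun h => h.1 ▸ h.2 ▸ rfl⟩
  · simpa using congrArg topBlock h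
  · simpa using congrArg lastBlock h

lemma sum_univ_blocks {M : Type*} [AddCommMonoid M] (f : Fin (m+1) × Fin L → M) :
    ∑ r, f r = ∑ s : Fin m × Fin L, f (s.1.castSucc, s.2) + ∑ a, f (Fin.last m, a) := by
  rw [Fintype.sum_prod_type, Fin.sum_univ_castSucc, Fintype.sum_prod_type]

lemma vcat_mul {k : Type*} [Fintype k] (T : Matrix (Fin m × Fin L) k ℂ)
    (Bo : Matrix (Fin L) k ℂ) (M : Matrix k col ℂ) :
    vcat T Bo * M = vcat (T * M) (Bo * M) := by
  ext ⟨r, a⟩ c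
  induction r using Fin.lastCases <;> simp [Matrix.mul_apply]

lemma vcat_sub (T T' : Matrix (Fin m × Fin L) col ℂ) (Bo Bo' : Matrix (Fin L) col ℂ) :
    vcat T Bo - vcat T' Bo' = vcat (T - T') (Bo - Bo') := by
  ext ⟨r, a⟩ c
  induction r using Fin.lastCases <;> simp

lemma twoBlock_mul_vcat (R : Matrix (Fin m × Fin L) (Fin m × Fin L) ℂ)
    (Z : Matrix (Fin m × Fin L) (Fin L) ℂ) (N : Matrix (Fin L) (Fin L) ℂ)
    (X : Matrix (Fin m × Fin L) col ℂ) (x : Matrix (Fin L) col ℂ) :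
    twoBlock R Z N * vcat X x = vcat (R * X + Z * x) (N * x) := by
  ext ⟨r, a⟩ c
  induction r using Fin.lastCases <;> simp [Matrix.mul_apply, sum_univ_blocks, twoBlock]

lemma threeBlock_mul_vcat (R : Matrix (Fin m × Fin L) (Fin m × Fin L) ℂ)
    (Z : Matrix (Fin m × Fin L) (Fin L) ℂ) (Hm Hb : Matrix (Fin L) (Fin L) ℂ)
    (X : Matrix (Fin m × Fin L) col ℂ) (x : Matrix (Fin L) col ℂ) :
    threeBlock R Z Hm Hb * vcat X x = vcat (vcat (R * X + Z * x) (Hm * x)) (Hb * x) := by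
  ext ⟨r, a⟩ c
  induction r using Fin.lastCases with
  | last => simp [Matrix.mul_apply, sum_univ_blocks, threeBlock]
  | cast r =>
    induction r using Fin.lastCases <;> simp [Matrix.mul_apply, sum_univ_blocks, threeBlock]

lemma extendOne_mul_vcat (Q : Matrix (Fin m × Fin L) (Fin m × Fin L) ℂ)
    (X : Matrix (Fin m × Fin L) col ℂ) (x : Matrix (Fin L) col ℂ) :
    extendOne Q * vcat X x = vcat (Q * X) x := by
  ext ⟨r, a⟩ c
  induction r using Fin.lastCases <;> simp [Matrix.mul_apply, sum_univ_blocks, extendOne]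

lemma trailingTwo_mul_vcat_vcat (Q11 Q12 Q21 Q22 : Matrix (Fin L) (Fin L) ℂ)
    (X : Matrix (Fin m × Fin L) col ℂ) (x y : Matrix (Fin L) col ℂ) :
    (trailingTwo Q11 Q12 Q21 Q22 : Matrix (Fin (m+1+1) × Fin L) (Fin (m+1+1) × Fin L) ℂ)
        * vcat (vcat X x) y = vcat (vcat X (Q11 * x + Q12 * y)) (Q21 * x + Q22 * y) := by
  ext ⟨r, a⟩ c
  rw [Matrix.mul_apply, sum_univ_blocks, sum_univ_blocks]
  induction r using Fin.lastCases with
  | last => simp [trailingTwo, Matrix.mul_apply, (Fin.castSucc_ne_last _).symm]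
  | cast r =>
    induction r using Fin.lastCases <;>
      simp [trailingTwo, Matrix.mul_apply, ite_and, Fintype.sum_prod_type,
        (Fin.castSucc_ne_last _).symm]

lemma stackZero_eq_vcat (R : Matrix (Fin m × Fin L) (Fin m × Fin L) ℂ) :
    stackZero R = vcat R 0 := by
  ext ⟨r, a⟩ c
  induction r using Fin.lastCases <;> simp [stackZero]

lemma topBlock_threeBlock (R : Matrix (Fin m × Fin L) (Fin m × Fin L) ℂ)
    (Z : Matrix (Fin m × Fin L) (Fin L) ℂ) (Hm Hb : Matrix (Fin L) (Fin L) ℂ) :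
    topBlock (threeBlock R Z Hm Hb) = twoBlock R Z Hm := by
  ext ⟨r, a⟩ ⟨k, b⟩
  induction r using Fin.lastCases <;> induction k using Fin.lastCases <;>
    simp [topBlock, threeBlock, twoBlock]

lemma threeBlock_zero (R : Matrix (Fin m × Fin L) (Fin m × Fin L) ℂ)
    (Z : Matrix (Fin m × Fin L) (Fin L) ℂ) (N : Matrix (Fin L) (Fin L) ℂ) :
    threeBlock R Z N 0 = stackZero (twoBlock R Z N) := by
  ext ⟨r, a⟩ ⟨k, b⟩
  rw [stackZero_eq_vcat, ← topBlock_threeBlock R Z N 0]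
  induction r using Fin.lastCases with
  | last => induction k using Fin.lastCases <;> simp [threeBlock]
  | cast r => simp [topBlock]

lemma EL_succ_mul (S : Matrix (Fin L) (Fin L) ℂ) :
    EL (m+2) L * S = vcat (EL (m+1) L * S) 0 := by
  ext ⟨r, a⟩ c
  induction r using Fin.lastCases <;> simp [EL, Matrix.mul_apply]

lemma extendOne_mul_extendOne (A B : Matrix (Fin m × Fin L) (Fin m × Fin L) ℂ) :
    extendOne A * extendOne B = extendOne (A * B) := by
  ext ⟨r, a⟩ ⟨k, b⟩
  rw [Matrix.mul_apply, sum_univ_blocks]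
  induction r using Fin.lastCases <;> induction k using Fin.lastCases <;>
    simp [extendOne, Matrix.mul_apply]

lemma extendOne_one : extendOne (1 : Matrix (Fin m × Fin L) (Fin m × Fin L) ℂ) = 1 := by
  ext ⟨r, a⟩ ⟨k, b⟩
  induction r using Fin.lastCases <;> induction k using Fin.lastCases <;>
    simp [extendOne, Matrix.one_apply, Fin.val_inj, (Fin.castSucc_ne_last _).symm]

lemma conjTranspose_extendOne (Q : Matrix (Fin m × Fin L) (Fin m × Fin L) ℂ) :
    (extendOne Q)ᴴ = extendOne Qᴴ := by
  ext ⟨r, a⟩ ⟨k, b⟩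
  induction r using Fin.lastCases <;> induction k using Fin.lastCases <;>
    simp [extendOne, eq_comm]

lemma topBlock_extendOne_mul (Q : Matrix (Fin m × Fin L) (Fin m × Fin L) ℂ)
    (M : Matrix (Fin (m+1) × Fin L) col ℂ) :
    topBlock (extendOne Q * M) = Q * topBlock M := by
  conv_lhs => rw [← vcat_topBlock_lastBlock M]
  rw [extendOne_mul_vcat, topBlock_vcat]

end BlockMatrix

open BlockMatrix

section FrobeniusLeastSquares

variable {a b : Type*} [Fintype a] [Fintype b]

lemma frobSq_nonneg (M : Matrix a b ℂ) : 0 ≤ frobSq M :=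
  Finset.sum_nonneg fun _ _ => Finset.sum_nonneg fun _ _ => Complex.normSq_nonneg _

@[simp] lemma frobSq_zero : frobSq (0 : Matrix a b ℂ) = 0 := by simp [frobSq]

@[simp] lemma frobSq_neg (M : Matrix a b ℂ) : frobSq (-M) = frobSq M := by simp [frobSq]

lemma frobSq_eq_re_trace (M : Matrix a b ℂ) : frobSq M = (Mᴴ * M).trace.re := by
  rw [Matrix.trace, Complex.re_sum, frobSq, Finset.sum_comm]
  refine Finset.sum_congr rfl fun c _ => ?_
  rw [Matrix.diag_apply, Matrix.mul_apply, Complex.re_sum]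
  refine Finset.sum_congr rfl fun r _ => ?_
  rw [Matrix.conjTranspose_apply, Complex.star_def, ← Complex.normSq_eq_conj_mul_self,
    Complex.ofReal_re]

lemma frobSq_unitary_mul [DecidableEq a] {G : Matrix a a ℂ} (hG : Gᴴ * G = 1)
    (M : Matrix a b ℂ) : frobSq (G * M) = frobSq M := by
  rw [frobSq_eq_re_trace, frobSq_eq_re_trace, Matrix.conjTranspose_mul, Matrix.mul_assoc,
    ← Matrix.mul_assoc Gᴴ, hG, Matrix.one_mul]

lemma frobSq_eq_topBlock_add_lastBlock {m L : ℕ} (M : Matrix (Fin (m+1) × Fin L) b ℂ) :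
    frobSq M = frobSq (topBlock M) + frobSq (lastBlock M) := by
  rw [frobSq, sum_univ_blocks]
  rfl

theorem IsUniqueFrobMin.eq_of_unitary_mul_eq_stackZero {m L : ℕ}
    {Hb : Matrix (Fin (m+1) × Fin L) (Fin m × Fin L) ℂ} {T : Matrix (Fin (m+1) × Fin L) b ℂ}
    {Y Y₀ : Matrix (Fin m × Fin L) b ℂ} (hY : IsUniqueFrobMin Hb T Y)
    {G : Matrix (Fin (m+1) × Fin L) (Fin (m+1) × Fin L) ℂ} (hG : Gᴴ * G = 1)
    {Rb : Matrix (Fin m × Fin L) (Fin m × Fin L) ℂ} (hGH : G * Hb = stackZero Rb)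
    (hY₀ : Rb * Y₀ = topBlock (G * T)) : Y₀ = Y := by
  have residual : ∀ Y' : Matrix (Fin m × Fin L) b ℂ, frobSq (Hb * Y' - T)
      = frobSq (Rb * Y' - topBlock (G * T)) + frobSq (lastBlock (G * T)) := fun Y' => by
    rw [← frobSq_unitary_mul hG, Matrix.mul_sub, ← Matrix.mul_assoc, hGH, stackZero_eq_vcat,
      vcat_mul, ← vcat_topBlock_lastBlock (G * T), vcat_sub, frobSq_eq_topBlock_add_lastBlock]
    simp
  have hmin : frobSq (Hb * Y₀ - T) = frobSq (lastBlock (G * T)) := by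
    rw [residual, hY₀, sub_self, frobSq_zero, zero_add]
  -- `IsUniqueFrobMin` quantifies over the type synonym `CStarMatrix`, so we close the goal up to
  -- defeq instead of rewriting with `residual`.
  refine hY.2 Y₀ fun Y' => ?_
  exact hmin.trans_le ((le_add_of_nonneg_left (frobSq_nonneg _)).trans_eq (residual Y').symm)

end FrobeniusLeastSquares

section BackSubstitution

variable {m L : ℕ} {col : Type*}

def backSubst (R : Matrix (Fin m × Fin L) (Fin m × Fin L) ℂ) (Z : Matrix (Fin m × Fin L) (Fin L) ℂ)
    (N : Matrix (Fin L) (Fin L) ℂ) (T : Matrix (Fin m × Fin L) col ℂ) (c : Matrix (Fin L) col ℂ) :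
    Matrix (Fin (m+1) × Fin L) col ℂ :=
  vcat (R⁻¹ * (T - Z * (N⁻¹ * c))) (N⁻¹ * c)

lemma twoBlock_mul_backSubst [Fintype col] {R : Matrix (Fin m × Fin L) (Fin m × Fin L) ℂ}
    {N : Matrix (Fin L) (Fin L) ℂ} (hR : IsUnit R) (hN : IsUnit N)
    (Z : Matrix (Fin m × Fin L) (Fin L) ℂ) (T : Matrix (Fin m × Fin L) col ℂ)
    (c : Matrix (Fin L) col ℂ) : twoBlock R Z N * backSubst R Z N T c = vcat T c := by
  rw [backSubst, twoBlock_mul_vcat,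
    Matrix.mul_nonsing_inv_cancel_left _ _ (R.isUnit_iff_isUnit_det.mp hR), sub_add_cancel,
    Matrix.mul_nonsing_inv_cancel_left _ _ (N.isUnit_iff_isUnit_det.mp hN)]

lemma backSubst_sub_backSubst (R : Matrix (Fin m × Fin L) (Fin m × Fin L) ℂ)
    (Z : Matrix (Fin m × Fin L) (Fin L) ℂ) (N N' : Matrix (Fin L) (Fin L) ℂ)
    (T : Matrix (Fin m × Fin L) col ℂ) (c c' : Matrix (Fin L) col ℂ) :
    backSubst R Z N T c - backSubst R Z N' T c'
      = vcat (-(R⁻¹ * Z)) 1 * (N⁻¹ * c - N'⁻¹ * c') := by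
  rw [backSubst, backSubst, vcat_sub, vcat_mul, ← Matrix.mul_sub, sub_sub_sub_cancel_left,
    ← Matrix.mul_sub, Matrix.neg_mul, Matrix.mul_assoc, Matrix.one_mul, ← neg_sub (N⁻¹ * c),
    Matrix.mul_neg, Matrix.mul_neg]

end BackSubstitution

section CSDecomposition

variable {ι 𝕜 : Type*} [Fintype ι] [DecidableEq ι] [CommRing 𝕜] [StarRing 𝕜]
  {U₁ U₂ V₁ V₂ C S Q₁₁ Q₁₂ Q₂₁ Q₂₂ H K N : Matrix ι ι 𝕜}

lemma cos_mul_conjTranspose_mul_eq_of_cs (hU₁ : U₁ᴴ * U₁ = 1) (hU₂ : U₂ᴴ * U₂ = 1)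
    (hCS : Commute C S) (hpyth : C * C + S * S = 1)
    (hQ₁₁ : Q₁₁ = U₁ * C * V₁ᴴ) (hQ₁₂ : Q₁₂ = U₁ * S * V₂ᴴ)
    (hQ₂₁ : Q₂₁ = U₂ * S * V₁ᴴ) (hQ₂₂ : Q₂₂ = -(U₂ * C * V₂ᴴ))
    (hN : Q₁₁ * H + Q₁₂ * K = N) (hzero : Q₂₁ * H + Q₂₂ * K = 0) :
    C * (U₁ᴴ * N) = V₁ᴴ * H := by
  have hSC : S * (V₁ᴴ * H) = C * (V₂ᴴ * K) := by
    rw [hQ₂₁, hQ₂₂, neg_mul, add_neg_eq_zero] at hzero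
    simpa only [Matrix.mul_assoc, ← Matrix.mul_assoc U₂ᴴ, hU₂, Matrix.one_mul]
      using congrArg (U₂ᴴ * ·) hzero
  have hU₁N : U₁ᴴ * N = C * (V₁ᴴ * H) + S * (V₂ᴴ * K) := by
    rw [← hN, hQ₁₁, hQ₁₂]
    simp only [Matrix.mul_add, Matrix.mul_assoc, ← Matrix.mul_assoc U₁ᴴ, hU₁, Matrix.one_mul]
  calc C * (U₁ᴴ * N) = C * C * (V₁ᴴ * H) + S * (C * (V₂ᴴ * K)) := by
        rw [hU₁N, Matrix.mul_add, ← Matrix.mul_assoc C S, hCS.eq]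
        simp only [Matrix.mul_assoc]
    _ = V₁ᴴ * H := by
        rw [← hSC, ← Matrix.mul_assoc S, ← Matrix.add_mul, hpyth, Matrix.one_mul]

lemma inv_sub_inv_mul_eq_of_cs (hU₁ : U₁ᴴ * U₁ = 1) (hU₂ : U₂ᴴ * U₂ = 1) (hV₁ : V₁ᴴ * V₁ = 1)
    (hCS : Commute C S) (hpyth : C * C + S * S = 1)
    (hQ₁₁ : Q₁₁ = U₁ * C * V₁ᴴ) (hQ₁₂ : Q₁₂ = U₁ * S * V₂ᴴ)
    (hQ₂₁ : Q₂₁ = U₂ * S * V₁ᴴ) (hQ₂₂ : Q₂₂ = -(U₂ * C * V₂ᴴ))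
    (hN : Q₁₁ * H + Q₁₂ * K = N) (hzero : Q₂₁ * H + Q₂₂ * K = 0) (hH : IsUnit H) :
    H⁻¹ - N⁻¹ * Q₁₁ = H⁻¹ * V₁ * (S * S) * V₁ᴴ := by
  have hV₁' : V₁ * V₁ᴴ = 1 := mul_eq_one_comm.mp hV₁
  have hNinv : N⁻¹ = H⁻¹ * V₁ * C * U₁ᴴ := by
    refine Matrix.inv_eq_left_inv ?_
    rw [Matrix.mul_assoc, Matrix.mul_assoc, Matrix.mul_assoc,
      cos_mul_conjTranspose_mul_eq_of_cs hU₁ hU₂ hCS hpyth hQ₁₁ hQ₁₂ hQ₂₁ hQ₂₂ hN hzero,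
      ← Matrix.mul_assoc V₁, hV₁', Matrix.one_mul,
      Matrix.nonsing_inv_mul _ (H.isUnit_iff_isUnit_det.mp hH)]
  rw [hNinv, hQ₁₁, eq_sub_of_add_eq' hpyth]
  simp only [Matrix.mul_sub, Matrix.sub_mul, Matrix.mul_one, Matrix.mul_assoc]
  rw [hV₁', Matrix.mul_one, ← Matrix.mul_assoc U₁ᴴ U₁, hU₁, Matrix.one_mul]

end CSDecomposition

lemma diagonal_ofReal_mul_self_add {ι : Type*} [Fintype ι] [DecidableEq ι] {c s : ι → ℝ}
    (h : ∀ i, c i ^ 2 + s i ^ 2 = 1) :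
    diagonal (fun i => (c i : ℂ)) * diagonal (fun i => (c i : ℂ))
      + diagonal (fun i => (s i : ℂ)) * diagonal (fun i => (s i : ℂ)) = 1 := by
  rw [diagonal_mul_diagonal, diagonal_mul_diagonal, diagonal_add, ← diagonal_one]
  congr 1
  funext i
  exact_mod_cast (sq (c i) ▸ sq (s i) ▸ h i)

namespace QRSetup

variable {L p : ℕ} {Hbar : Matrix (Fin (p+2) × Fin L) (Fin (p+1) × Fin L) ℂ}
  {S0 : Matrix (Fin L) (Fin L) ℂ} (S : QRSetup L p Hbar S0)

/-- The paper's `Q̄_j = Q_j diag(Q̄_{j-1}, I_L)`. -/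
def Qnext : Matrix (Fin (p+2) × Fin L) (Fin (p+2) × Fin L) ℂ :=
  trailingTwo (m := p) S.Q11 S.Q12 S.Q21 S.Q22 * extendOne S.Qbar

lemma Ct_eq_lastBlock : S.Ct = lastBlock (S.Qbar * (EL (p+1) L * S0)) := rfl

lemma Qbar_mul_topBlock : S.Qbar * topBlock Hbar = twoBlock S.R S.Z S.Hhat := by
  rw [← topBlock_extendOne_mul, S.qr_split, topBlock_threeBlock]

lemma Qj_mul_lastBlockCol :
    S.Q11 * S.Hhat + S.Q12 * S.Hsub = S.N ∧ S.Q21 * S.Hhat + S.Q22 * S.Hsub = 0 := by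
  have h := congrArg (· * vcat (0 : Matrix (Fin p × Fin L) (Fin L) ℂ) 1) S.qr_full
  simp only [S.qr_split, Matrix.mul_assoc, threeBlock_mul_vcat] at h
  rw [trailingTwo_mul_vcat_vcat] at h
  simpa only [vcat_inj, Matrix.mul_one, Matrix.zero_mul, true_and] using h

lemma Qnext_unitary : S.Qnextᴴ * S.Qnext = 1 := by
  rw [Qnext, Matrix.conjTranspose_mul, Matrix.mul_assoc,
    ← Matrix.mul_assoc _ (trailingTwo _ _ _ _), S.Qj_unit, Matrix.one_mul,
    conjTranspose_extendOne, extendOne_mul_extendOne, S.Qbar_unit, extendOne_one]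

lemma Qnext_mul_Hbar : S.Qnext * Hbar = stackZero (twoBlock S.R S.Z S.N) := by
  rw [Qnext, Matrix.mul_assoc, S.qr_full, threeBlock_zero]

lemma topBlock_Qnext_mul_rhs :
    topBlock (S.Qnext * (EL (p+2) L * S0))
      = vcat (topBlock (S.Qbar * (EL (p+1) L * S0))) S.C := by
  have hCt : S.Qbar * (EL (p+1) L * S0)
      = vcat (topBlock (S.Qbar * (EL (p+1) L * S0))) S.Ct := by
    rw [Ct_eq_lastBlock, vcat_topBlock_lastBlock]
  rw [Qnext, Matrix.mul_assoc, EL_succ_mul, extendOne_mul_vcat, hCt, trailingTwo_mul_vcat_vcat]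
  simp [C]

lemma eq_backSubst_of_isUniqueFrobMin {Y : Matrix (Fin (p+1) × Fin L) (Fin L) ℂ}
    (hY : IsUniqueFrobMin Hbar (EL (p+2) L * S0) Y) :
    Y = backSubst S.R S.Z S.N (topBlock (S.Qbar * (EL (p+1) L * S0))) S.C := by
  refine (hY.eq_of_unitary_mul_eq_stackZero S.Qnext_unitary S.Qnext_mul_Hbar ?_).symm
  rw [twoBlock_mul_backSubst S.R_inv S.N_inv, topBlock_Qnext_mul_rhs]

lemma inv_mul_eq_backSubst (hH : IsUnit (topBlock Hbar)) (hHhat : IsUnit S.Hhat) :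
    (topBlock Hbar)⁻¹ * (EL (p+1) L * S0)
      = backSubst S.R S.Z S.Hhat (topBlock (S.Qbar * (EL (p+1) L * S0))) S.Ct := by
  set Y := backSubst S.R S.Z S.Hhat (topBlock (S.Qbar * (EL (p+1) L * S0))) S.Ct
  have hQbar : S.Qbar * (topBlock Hbar * Y) = S.Qbar * (EL (p+1) L * S0) := by
    rw [← Matrix.mul_assoc, Qbar_mul_topBlock, twoBlock_mul_backSubst S.R_inv hHhat,
      Ct_eq_lastBlock, vcat_topBlock_lastBlock]
  have hHY : topBlock Hbar * Y = EL (p+1) L * S0 := by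
    simpa only [← Matrix.mul_assoc, S.Qbar_unit, Matrix.one_mul]
      using congrArg (S.Qbarᴴ * ·) hQbar
  rw [← hHY, Matrix.nonsing_inv_mul_cancel_left _ _ ((topBlock Hbar).isUnit_iff_isUnit_det.mp hH)]

end QRSetup

theorem stmt17_general {n L p : ℕ}
    (X0 : Matrix (Fin n) (Fin L) ℂ)
    (W : Matrix (Fin n) (Fin (p+2) × Fin L) ℂ)
    (S0 : Matrix (Fin L) (Fin L) ℂ)
    (Hbar : Matrix (Fin (p+2) × Fin L) (Fin (p+1) × Fin L) ℂ)
    (S : QRSetup L p Hbar S0)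
    (Yj : Matrix (Fin (p+1) × Fin L) (Fin L) ℂ)
    (hYj : IsUniqueFrobMin Hbar (EL (p+2) L * S0) Yj)
    (hHinv : IsUnit (Hbar.submatrix (Prod.map Fin.castSucc id) id))
    (U1 U2 V1 V2 : Matrix (Fin L) (Fin L) ℂ)
    (hU1 : U1ᴴ * U1 = 1) (hU2 : U2ᴴ * U2 = 1) (hV1 : V1ᴴ * V1 = 1)
    (cs sn : Fin L → ℝ)
    (hpyth : ∀ i, cs i ^ 2 + sn i ^ 2 = 1)
    (hQ11 : S.Q11 = U1 * Matrix.diagonal (fun i => (cs i : ℂ)) * V1ᴴ)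
    (hQ12 : S.Q12 = U1 * Matrix.diagonal (fun i => (sn i : ℂ)) * V2ᴴ)
    (hQ21 : S.Q21 = U2 * Matrix.diagonal (fun i => (sn i : ℂ)) * V1ᴴ)
    (hQ22 : S.Q22 = -(U2 * Matrix.diagonal (fun i => (cs i : ℂ)) * V2ᴴ))
    (Mh Y2 : Matrix (Fin L) (Fin L) ℂ)
    (hMh_unit : Mhᴴ * Mh = 1) (hY2_inv : IsUnit Y2)
    (hHhat : S.Hhat = Mh * Y2) (hQhatb : S.Qhatb = Mhᴴ) :
    (X0 + W.submatrix id (Prod.map Fin.castSucc id)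
        * ((Hbar.submatrix (Prod.map Fin.castSucc id) id)⁻¹ * (EL (p+1) L * S0)))
      - (X0 + W.submatrix id (Prod.map Fin.castSucc id) * Yj)
    = W.submatrix id (Prod.map Fin.castSucc id)
        * (vcat (-(S.R⁻¹ * S.Z)) (1 : Matrix (Fin L) (Fin L) ℂ)
            * (Y2⁻¹ * ((Mhᴴ * V1) * (Matrix.diagonal fun i => (sn i : ℂ)) ^ 2
                * (Mhᴴ * V1)ᴴ) * S.Chat)) := by
  have hMh : Mh * Mhᴴ = 1 := mul_eq_one_comm.mp hMh_unit
  have hHhat_unit : IsUnit S.Hhat := hHhat ▸ (Units.mk Mh Mhᴴ hMh hMh_unit).isUnit.mul hY2_inv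
  have hHhat_inv : S.Hhat⁻¹ = Y2⁻¹ * Mhᴴ := Matrix.inv_eq_left_inv <| by
    rw [hHhat, Matrix.mul_assoc, ← Matrix.mul_assoc Mhᴴ, hMh_unit, Matrix.one_mul,
      Matrix.nonsing_inv_mul _ (Y2.isUnit_iff_isUnit_det.mp hY2_inv)]
  have hCt : S.Ct = Mh * S.Chat := by
    rw [QRSetup.Chat, hQhatb, ← Matrix.mul_assoc, hMh, Matrix.one_mul]
  obtain ⟨hN, hzero⟩ := S.Qj_mul_lastBlockCol
  have hcore := inv_sub_inv_mul_eq_of_cs hU1 hU2 hV1 (commute_diagonal _ _)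
    (diagonal_ofReal_mul_self_add hpyth) hQ11 hQ12 hQ21 hQ22 hN hzero hHhat_unit
  have hFOM : (Hbar.submatrix (Prod.map Fin.castSucc id) id)⁻¹ * (EL (p+1) L * S0) = _ :=
    S.inv_mul_eq_backSubst hHinv hHhat_unit
  rw [add_sub_add_left_eq_sub, hFOM,
    S.eq_backSubst_of_isUniqueFrobMin hYj, ← Matrix.mul_sub, backSubst_sub_backSubst,
    QRSetup.C, ← Matrix.mul_assoc S.N⁻¹, ← Matrix.sub_mul, hcore, hHhat_inv, hCt, sq,
    Matrix.conjTranspose_mul, conjTranspose_conjTranspose]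
  simp only [Matrix.mul_assoc]

/-- (Valid also after block Arnoldi breakdown with replacement of
dependent basis vectors.)  Assuming only the block Arnoldi relation
`A W_j = W_{j+1} H̄_j` (`W_{j+1}` with orthonormal columns, `F₀ = V₁ S₀`), the QR and
CS setups, `H_j` invertible, `Ĥ_{jj} = M̂_j Ŷ₂` with `M̂_j` unitary and `Ŷ₂` upper
triangular invertible and `Q̂_j^(b) = M̂_jᴴ`, one has
`X_j^(F) - X_j^(G) = W_j [−R_{j-1}⁻¹ Z_j; I_L] Ŷ₂⁻¹ 𝒬 𝒮² 𝒬ᴴ Ĉ_j` with `𝒬 = M̂_jᴴ 𝒱₁`. -/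
theorem stmt17 {n L p : ℕ} (hL : 1 ≤ L) (hn : (p+2) * L ≤ n)
    (A : Matrix (Fin n) (Fin n) ℂ) (B X0 : Matrix (Fin n) (Fin L) ℂ)
    (W : Matrix (Fin n) (Fin (p+2) × Fin L) ℂ)
    (S0 : Matrix (Fin L) (Fin L) ℂ)
    (Hbar : Matrix (Fin (p+2) × Fin L) (Fin (p+1) × Fin L) ℂ)
    (horth : Wᴴ * W = 1)
    (hS0_ut : utL S0) (hS0_inv : IsUnit S0)
    (hF0 : B - A * X0 = (W.submatrix id fun c : Fin L => ((0 : Fin (p+2)), c)) * S0)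
    (harnoldi : A * W.submatrix id (Prod.map Fin.castSucc id) = W * Hbar)
    (hhess : ∀ r c, (c.1 : ℕ) + 1 < (r.1 : ℕ) → Hbar r c = 0)
    (S : QRSetup L p Hbar S0)
    (Yj : Matrix (Fin (p+1) × Fin L) (Fin L) ℂ)
    (hYj : IsUniqueFrobMin Hbar (EL (p+2) L * S0) Yj)
    (hHinv : IsUnit (Hbar.submatrix (Prod.map Fin.castSucc id) id))
    (U1 U2 V1 V2 : Matrix (Fin L) (Fin L) ℂ)
    (hU1 : U1ᴴ * U1 = 1) (hU2 : U2ᴴ * U2 = 1) (hV1 : V1ᴴ * V1 = 1) (hV2 : V2ᴴ * V2 = 1)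
    (cs sn : Fin L → ℝ)
    (hcs : ∀ i, 0 ≤ cs i) (hsn : ∀ i, 0 ≤ sn i)
    (hpyth : ∀ i, cs i ^ 2 + sn i ^ 2 = 1)
    (hQ11 : S.Q11 = U1 * Matrix.diagonal (fun i => (cs i : ℂ)) * V1ᴴ)
    (hQ12 : S.Q12 = U1 * Matrix.diagonal (fun i => (sn i : ℂ)) * V2ᴴ)
    (hQ21 : S.Q21 = U2 * Matrix.diagonal (fun i => (sn i : ℂ)) * V1ᴴ)
    (hQ22 : S.Q22 = -(U2 * Matrix.diagonal (fun i => (cs i : ℂ)) * V2ᴴ))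
    (Mh Y2 : Matrix (Fin L) (Fin L) ℂ)
    (hMh_unit : Mhᴴ * Mh = 1) (hY2_ut : utL Y2) (hY2_inv : IsUnit Y2)
    (hHhat : S.Hhat = Mh * Y2) (hQhatb : S.Qhatb = Mhᴴ) :
    (X0 + W.submatrix id (Prod.map Fin.castSucc id)
        * ((Hbar.submatrix (Prod.map Fin.castSucc id) id)⁻¹ * (EL (p+1) L * S0)))
      - (X0 + W.submatrix id (Prod.map Fin.castSucc id) * Yj)
    = W.submatrix id (Prod.map Fin.castSucc id)
        * (vcat (-(S.R⁻¹ * S.Z)) (1 : Matrix (Fin L) (Fin L) ℂ)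
            * (Y2⁻¹ * ((Mhᴴ * V1) * (Matrix.diagonal fun i => (sn i : ℂ)) ^ 2
                * (Mhᴴ * V1)ᴴ) * S.Chat)) :=
  stmt17_general X0 W S0 Hbar S Yj hYj hHinv U1 U2 V1 V2 hU1 hU2 hV1 cs sn hpyth hQ11 hQ12 hQ21 hQ22
    Mh Y2 hMh_unit hY2_inv hHhat hQhatb

end
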